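/- arXiv:2312.15876 — 3 statements merged into one kernel-verified Lean document; each statement's English description precedes it below -/
import Mathlib

section
/- There exist constants C > 0 and C_0 > 0, independent of δ and of J_1, J_2, such that for all ℓ, ℓ' ∈ ℕ_0^* with 0 ≤ ℓ, ℓ' ≤ (π/8) δ^{-1/2} − 1, all η_0', η_1' ∈ J̃_1 and η_0'', η_1'' ∈ J̃_2 with η_0' + η_0'' = η_1' + η_1'' = η, and every real b with C_0 ≤ b ≤ (π/4) δ^{-1/2} − 2, the rectangles R_{ℓ,δ}(η_0',η_0'') and ℛ_{b δ^{1/2}} R_{ℓ',δ}(η_1',η_1'') are disjoint, where R_{ℓ,δ}(η',η'') = p_{ℓ,δ}(η',η'') + R_0(c_1 ℓ_* δ, (c_2+4) δ^{1/2}) for fixed constants c_1, c_2 > 0. -/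
open Set Pointwise

noncomputable def GammaD (δ μ : ℝ) : Set ℂ :=
  {ξ : ℂ | ξ ≠ 0 ∧ μ * Real.sqrt δ ≤ ξ.arg ∧ ξ.arg < (μ + 1) * Real.sqrt δ}

def calND (δ : ℝ) : Set ℤ :=
  {μ : ℤ | |(μ : ℝ)| ≤ Real.pi / 8 * (Real.sqrt δ)⁻¹ - 1}

noncomputable def uSetD (δ μ : ℝ) (J : Set ℝ) : Set (ℂ × ℝ) :=
  {p : ℂ × ℝ | |p.2 - ‖p.1‖| ≤ δ ∧ p.1 ∈ GammaD δ μ ∧ ‖p.1‖ ∈ J}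

noncomputable def rot (σ : ℝ) : ℂ → ℂ := fun z => Complex.exp (σ * Complex.I) * z

noncomputable def pPt (δ ℓ η' η'' : ℝ) : ℂ :=
  ⟨(η' + η'') * Real.cos (ℓ * Real.sqrt δ), (η' - η'') * Real.sin (ℓ * Real.sqrt δ)⟩

def rect (p : ℂ) (a b : ℝ) : Set ℂ :=
  {z : ℂ | |z.re - p.re| ≤ a ∧ |z.im - p.im| ≤ b}

/-!
Apply the rotation by `-φ/2`, `φ = b √δ`, to both sets: the first rectangle turns by `-φ/2`, the
rotated second one by `+φ/2`. Write the two angles as `θ = m + n`, `θ' = m - n`, and put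
`s = sin (φ/2)`, `c = cos (φ/2)`, `d = η₁' - η₁''`. By sum-to-product, the two coordinates of the
difference of the turned centres are `-2 sin m · H` and `-2 cos m · G` up to an `O(√δ)` error, where
`G = s η cos n - c d sin n` and `H = c η sin n - s d cos n`. A common point gives
`|G| ≲ κ = (c₁ + c₂ + 6) √δ` and `|sin m · H| ≲ (m + κ) κ + s κ`, while Jordan's inequality gives
`s ≥ φ / π ≥ 48 κ` for `C₀ = 48 π (c₁ + c₂ + 6)`. Then `|G| ≪ s` forces `|sin n| ≳ s`, the identity
`s cos n · G - c sin n · H = η (s² - sin² n)` forces `|H| ≳ |sin n|`, and `m ≥ |sin n|` makes the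
bound on `sin m · H` impossible.
-/

open Real

lemma nine_tenths_le_cos {x : ℝ} (hx : |x| ≤ 2 / 5) : 9 / 10 ≤ cos x := by
  nlinarith [one_sub_sq_div_two_le_cos (x := x), sq_abs x, abs_nonneg x]

lemma div_pi_le_sin_half {φ : ℝ} (h0 : 0 ≤ φ) (hπ : φ ≤ π) : φ / π ≤ sin (φ / 2) := by
  have := mul_le_sin (x := φ / 2) (by linarith) (by linarith)
  rwa [show 2 / π * (φ / 2) = φ / π by field_simp] at this

lemma half_le_sin {x : ℝ} (h0 : 0 ≤ x) (hπ : x ≤ π / 2) : x / 2 ≤ sin x := by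
  have h2π : 1 / 2 ≤ 2 / π := by rw [le_div_iff₀ pi_pos]; linarith [pi_le_four]
  linarith [mul_le_sin h0 hπ, mul_le_mul_of_nonneg_right h2π h0]

lemma rot_re (σ : ℝ) (z : ℂ) : (rot σ z).re = cos σ * z.re - sin σ * z.im := by
  simp only [rot, Complex.mul_re, Complex.exp_ofReal_mul_I_re, Complex.exp_ofReal_mul_I_im]

lemma rot_im (σ : ℝ) (z : ℂ) : (rot σ z).im = sin σ * z.re + cos σ * z.im := by
  simp only [rot, Complex.mul_im, Complex.exp_ofReal_mul_I_re, Complex.exp_ofReal_mul_I_im]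
  ring

lemma rot_rot (σ τ : ℝ) (z : ℂ) : rot σ (rot τ z) = rot (σ + τ) z := by
  simp only [rot, ← mul_assoc, ← Complex.exp_add, Complex.ofReal_add, add_mul]

lemma abs_re_rot_sub_rot_le {z p : ℂ} {a h : ℝ} (hz : z ∈ rect p a h) (σ : ℝ) :
    |(rot σ z).re - (rot σ p).re| ≤ a + |sin σ| * h := by
  obtain ⟨hre, him⟩ := hz
  calc |(rot σ z).re - (rot σ p).re| = |cos σ * (z.re - p.re) - sin σ * (z.im - p.im)| := by
        rw [rot_re, rot_re]; ring_nf
    _ ≤ |cos σ| * |z.re - p.re| + |sin σ| * |z.im - p.im| := by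
        simpa only [abs_mul] using abs_sub (cos σ * (z.re - p.re)) (sin σ * (z.im - p.im))
    _ ≤ 1 * a + |sin σ| * h := by
        gcongr
        · exact abs_cos_le_one σ
    _ = a + |sin σ| * h := by ring

lemma abs_im_rot_sub_rot_le {z p : ℂ} {a h : ℝ} (hz : z ∈ rect p a h) (σ : ℝ) :
    |(rot σ z).im - (rot σ p).im| ≤ |sin σ| * a + h := by
  obtain ⟨hre, him⟩ := hz
  calc |(rot σ z).im - (rot σ p).im| = |sin σ * (z.re - p.re) + cos σ * (z.im - p.im)| := by
        rw [rot_im, rot_im]; ring_nf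
    _ ≤ |sin σ| * |z.re - p.re| + |cos σ| * |z.im - p.im| := by
        simpa only [abs_mul] using abs_add_le (sin σ * (z.re - p.re)) (cos σ * (z.im - p.im))
    _ ≤ |sin σ| * a + 1 * h := by
        gcongr
        · exact abs_cos_le_one σ
    _ = |sin σ| * a + h := by ring

lemma abs_le_add_abs_of_abs_neg_add_le {x y B : ℝ} (h : |-x + y| ≤ B) : |x| ≤ B + |y| := by
  have := abs_sub y (-x + y)
  rw [show y - (-x + y) = x by ring] at this
  linarith

lemma abs_sub_rot_half_le {z w p q : ℂ} {a a' h φ : ℝ} (hz : z ∈ rect p a h)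
    (hw : w ∈ rect q a' h) (hwz : rot φ w = z) :
    |(rot (-(φ / 2)) p).re - (rot (φ / 2) q).re| ≤ a + a' + 2 * |sin (φ / 2)| * h ∧
      |(rot (-(φ / 2)) p).im - (rot (φ / 2) q).im| ≤ |sin (φ / 2)| * (a + a') + 2 * h := by
  have hzw : rot (-(φ / 2)) z = rot (φ / 2) w := by
    rw [← hwz, rot_rot]; congr 1; ring
  have hz₁ := abs_re_rot_sub_rot_le hz (-(φ / 2))
  have hz₂ := abs_im_rot_sub_rot_le hz (-(φ / 2))
  have hw₁ := abs_re_rot_sub_rot_le hw (φ / 2)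
  have hw₂ := abs_im_rot_sub_rot_le hw (φ / 2)
  rw [sin_neg, abs_neg, hzw, abs_sub_comm] at hz₁ hz₂
  constructor
  · linarith [abs_sub_le (rot (-(φ / 2)) p).re (rot (φ / 2) w).re (rot (φ / 2) q).re]
  · linarith [abs_sub_le (rot (-(φ / 2)) p).im (rot (φ / 2) w).im (rot (φ / 2) q).im]

lemma re_rot_half_sub_rot_half (φ η d₀ d₁ m n : ℝ) :
    (rot (-(φ / 2)) ⟨η * cos (m + n), d₀ * sin (m + n)⟩).re -
        (rot (φ / 2) ⟨η * cos (m - n), d₁ * sin (m - n)⟩).re =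
      -(2 * sin m * (cos (φ / 2) * η * sin n - sin (φ / 2) * d₁ * cos n)) +
        sin (φ / 2) * ((d₀ - d₁) * sin (m + n)) := by
  rw [rot_re, rot_re, cos_neg, sin_neg]
  simp only [cos_add, sin_add, cos_sub, sin_sub]
  ring

lemma im_rot_half_sub_rot_half (φ η d₀ d₁ m n : ℝ) :
    (rot (-(φ / 2)) ⟨η * cos (m + n), d₀ * sin (m + n)⟩).im -
        (rot (φ / 2) ⟨η * cos (m - n), d₁ * sin (m - n)⟩).im =
      -(2 * cos m * (sin (φ / 2) * η * cos n - cos (φ / 2) * d₁ * sin n)) +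
        cos (φ / 2) * ((d₀ - d₁) * sin (m + n)) := by
  rw [rot_im, rot_im, cos_neg, sin_neg]
  simp only [cos_add, sin_add, cos_sub, sin_sub]
  ring

lemma false_of_half_angle_bounds {s c η d m sm cm sn cn κ : ℝ}
    (hs : s ≤ 1) (hsc : s ^ 2 + c ^ 2 = 1) (hc : 0 ≤ c) (hκ : 0 < κ) (hκs : 48 * κ ≤ s)
    (hη : 1.99 ≤ η) (hd : |d| ≤ 1.01) (hsm : m / 2 ≤ sm) (hcm : 9 / 10 ≤ cm)
    (hsn : |sn| ≤ m) (hcn : 9 / 10 ≤ cn) (hscn : sn ^ 2 + cn ^ 2 = 1)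
    (hre : |2 * sm * (c * η * sn - s * d * cn)| ≤ 2 * (m + κ) * κ + 2 * s * κ)
    (him : |2 * cm * (s * η * cn - c * d * sn)| ≤ 2 * κ) : False := by
  set G := s * η * cn - c * d * sn
  set H := c * η * sn - s * d * cn
  have hs0 : 0 < s := by linarith
  have hc1 : c ≤ 1 := by nlinarith
  have hcn1 : cn ≤ 1 := by nlinarith [sq_nonneg sn]
  have hG_le : |G| ≤ s / 40 := by
    rw [abs_mul, abs_mul, abs_two, abs_of_pos (by linarith : 0 < cm)] at him
    nlinarith [abs_nonneg G]
  have hsn_ge : 1.7 * s ≤ |sn| := by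
    have hcd : |c * d * sn| ≤ 1.01 * |sn| := by
      rw [abs_mul, abs_mul, abs_of_nonneg hc]
      exact mul_le_mul_of_nonneg_right
        (by simpa using mul_le_mul hc1 hd (abs_nonneg d) zero_le_one) (abs_nonneg sn)
    have hηcn : 1.791 * s ≤ s * η * cn := by
      nlinarith [mul_le_mul hη hcn (by norm_num) (by linarith)]
    have : s * η * cn = G + c * d * sn := by ring
    linarith [le_abs_self G, le_abs_self (c * d * sn)]
  have hH_ge : 1.2 * |sn| ≤ |H| := by
    have hid : η * (sn ^ 2 - s ^ 2) = c * sn * H - s * cn * G := by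
      linear_combination (-(η * sn ^ 2)) * hsc + (η * s ^ 2) * hscn
    have hsG : |s * cn * G| ≤ s * (s / 40) := by
      rw [abs_mul, abs_mul, abs_of_pos hs0, abs_of_pos (by linarith : 0 < cn), mul_assoc]
      simpa using mul_le_mul_of_nonneg_left (mul_le_mul hcn1 hG_le (abs_nonneg G) zero_le_one)
        hs0.le
    have hcH : |c * sn * H| ≤ |sn| * |H| := by
      rw [abs_mul, abs_mul, abs_of_nonneg hc]
      exact mul_le_mul_of_nonneg_right (mul_le_of_le_one_left (abs_nonneg sn) hc1) (abs_nonneg H)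
    have : η * (sn ^ 2 - s ^ 2) ≤ |sn| * |H| + s * (s / 40) := by
      rw [hid]; linarith [abs_sub (c * sn * H) (s * cn * G), le_abs_self (c * sn * H - s * cn * G)]
    rw [← sq_abs sn] at this
    nlinarith [mul_le_mul hsn_ge hsn_ge (by positivity) (abs_nonneg sn), abs_nonneg H]
  rw [abs_mul, abs_mul, abs_two, abs_of_nonneg (by linarith [abs_nonneg sn] : 0 ≤ sm)] at hre
  nlinarith [abs_nonneg H, mul_le_mul hsm hH_ge (by positivity) (by linarith [abs_nonneg sn]),
    mul_le_mul hsn hsn_ge (by positivity) (by linarith [abs_nonneg sn])]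

theorem rect_inter_rot_rect_eq_empty {c₁ c₂ ε θ θ' φ η d₀ d₁ a a' : ℝ}
    (hc₁ : 0 ≤ c₁) (hc₂ : 0 ≤ c₂) (hε : 0 < ε)
    (hθ : 0 ≤ θ) (hθ' : 0 ≤ θ') (hθε : θ + ε ≤ π / 8) (hθ'ε : θ' + ε ≤ π / 8)
    (hφ : 48 * π * ((c₁ + c₂ + 6) * ε) ≤ φ) (hφπ : φ ≤ π)
    (hη : 1.99 ≤ η) (hd₁ : |d₁| ≤ 1.01) (hd : |d₀ - d₁| ≤ 2.01 * ε)
    (ha : a ≤ c₁ * (θ + ε) * ε) (ha' : a' ≤ c₁ * (θ' + ε) * ε) :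
    rect ⟨η * cos θ, d₀ * sin θ⟩ a ((c₂ + 4) * ε) ∩
      rot φ '' rect ⟨η * cos θ', d₁ * sin θ'⟩ a' ((c₂ + 4) * ε) = ∅ := by
  obtain ⟨m, n, rfl, rfl⟩ : ∃ m n, θ = m + n ∧ θ' = m - n :=
    ⟨(θ + θ') / 2, (θ - θ') / 2, by ring, by ring⟩
  refine eq_empty_iff_forall_notMem.2 fun z ⟨hz, w, hw, hwz⟩ => ?_
  obtain ⟨hre, him⟩ := abs_sub_rot_half_le hz hw hwz
  rw [re_rot_half_sub_rot_half] at hre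
  rw [im_rot_half_sub_rot_half] at him
  obtain ⟨κ, hκ⟩ : ∃ κ, κ = (c₁ + c₂ + 6) * ε := ⟨_, rfl⟩
  rw [← hκ] at hφ
  have hπ := pi_lt_d2
  have hc₁ε : 0 ≤ c₁ * ε := by positivity
  have hc₂ε : 0 ≤ c₂ * ε := by positivity
  have hκ0 : 0 < κ := by rw [hκ]; positivity
  have hεκ : ε ≤ κ := by rw [hκ]; linarith
  have hc₁κ : c₁ * ε ≤ κ := by rw [hκ]; linarith
  have hφ0 : 0 ≤ φ := le_trans (by positivity) hφ
  have hs : 48 * κ ≤ sin (φ / 2) :=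
    le_trans (by rw [le_div_iff₀ pi_pos]; linarith) (div_pi_le_sin_half hφ0 hφπ)
  have hs0 : 0 ≤ sin (φ / 2) := by linarith
  have hc : 0 ≤ cos (φ / 2) := cos_nonneg_of_mem_Icc ⟨by linarith, by linarith⟩
  have he : |(d₀ - d₁) * sin (m + n)| ≤ 2.01 * ε := by
    rw [abs_mul]; exact (mul_le_of_le_one_right (abs_nonneg _) (abs_sin_le_one _)).trans hd
  have hA : a + a' ≤ 2 * (m + ε) * (c₁ * ε) := by linarith
  have hm : |m| ≤ 2 / 5 := by rw [abs_of_nonneg (by linarith)]; linarith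
  have hn : |n| ≤ m := abs_le.2 ⟨by linarith, by linarith⟩
  have hre' := abs_le_add_abs_of_abs_neg_add_le hre
  have him' := abs_le_add_abs_of_abs_neg_add_le him
  rw [abs_of_nonneg hs0, abs_mul (sin (φ / 2)), abs_of_nonneg hs0] at hre'
  rw [abs_of_nonneg hs0, abs_mul (cos (φ / 2)), abs_of_nonneg hc] at him'
  refine false_of_half_angle_bounds (sin_le_one _) (sin_sq_add_cos_sq _) hc hκ0 hs hη hd₁
    (half_le_sin (by linarith) (by linarith)) (nine_tenths_le_cos hm)
    (abs_sin_le_abs.trans hn) (nine_tenths_le_cos (hn.trans (le_abs_self m) |>.trans hm))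
    (sin_sq_add_cos_sq n) ?_ ?_
  · have hAκ : (m + ε) * (c₁ * ε) ≤ (m + κ) * κ :=
      mul_le_mul (by linarith) hc₁κ hc₁ε (by linarith)
    have hhκ : sin (φ / 2) * (2 * ((c₂ + 4) * ε) + 2.01 * ε) ≤ sin (φ / 2) * (2 * κ) :=
      mul_le_mul_of_nonneg_left (by rw [hκ]; linarith) hs0
    linarith [mul_le_mul_of_nonneg_left he hs0]
  · have hsA : sin (φ / 2) * (a + a') ≤ c₁ * ε :=
      (mul_le_mul_of_nonneg_left hA hs0).trans <|
        (mul_le_of_le_one_left (mul_nonneg (by linarith) hc₁ε) (sin_le_one _)).trans <|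
          mul_le_of_le_one_left hc₁ε (by linarith)
    have hce : cos (φ / 2) * |(d₀ - d₁) * sin (m + n)| ≤ 2.01 * ε :=
      (mul_le_of_le_one_left (abs_nonneg _) (cos_le_one _)).trans he
    rw [hκ]
    linarith

lemma add_mul_le_of_le_mul_inv_sub {x t r ε : ℝ} (hε : 0 < ε) (h : x ≤ r * ε⁻¹ - t) :
    (x + t) * ε ≤ r := by
  rwa [le_sub_iff_add_le, ← div_eq_mul_inv, le_div_iff₀ hε] at h

lemma mul_max_half_mul_le {c x δ : ℝ} (hc : 0 ≤ c) (hx : 0 ≤ x) (hδ : 0 ≤ δ) :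
    c * max x (1 / 2) * δ ≤ c * (x * √δ + √δ) * √δ := by
  have hmax : max x (1 / 2) ≤ x + 1 := max_le (by linarith) (by linarith)
  calc c * max x (1 / 2) * δ ≤ c * (x + 1) * δ := by gcongr
    _ = c * (x + 1) * (√δ * √δ) := by rw [mul_self_sqrt hδ]
    _ = c * (x * √δ + √δ) * √δ := by ring

theorem statement15 :
    ∀ c₁ c₂ : ℝ, 0 < c₁ → 0 < c₂ →
    ∃ C C₀ : ℝ, 0 < C ∧ 0 < C₀ ∧
      ∀ δ : ℝ, 0 < δ → δ < 1 / 1000000 →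
      ∀ α₁ β₁ α₂ β₂ : ℝ,
        1 ≤ α₁ → α₁ ≤ β₁ → β₁ ≤ 2 → β₁ - α₁ ≤ Real.sqrt δ →
        1 ≤ α₂ → α₂ ≤ β₂ → β₂ ≤ 2 → β₂ - α₂ ≤ Real.sqrt δ →
      ∀ k k' : ℕ, (k : ℝ) / 2 ≤ Real.pi / 8 * (Real.sqrt δ)⁻¹ - 1 →
        (k' : ℝ) / 2 ≤ Real.pi / 8 * (Real.sqrt δ)⁻¹ - 1 →
      ∀ η₀' ∈ Icc (α₁ - δ) (β₁ + δ), ∀ η₁' ∈ Icc (α₁ - δ) (β₁ + δ),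
      ∀ η₀'' ∈ Icc (α₂ - δ) (β₂ + δ), ∀ η₁'' ∈ Icc (α₂ - δ) (β₂ + δ),
        η₀' + η₀'' = η₁' + η₁'' →
      ∀ b : ℝ, C₀ ≤ b → b ≤ Real.pi / 4 * (Real.sqrt δ)⁻¹ - 2 →
        rect (pPt δ ((k : ℝ) / 2) η₀' η₀'')
            (c₁ * max ((k : ℝ) / 2) (1 / 2) * δ) ((c₂ + 4) * Real.sqrt δ) ∩
          (rot (b * Real.sqrt δ) ''
            rect (pPt δ ((k' : ℝ) / 2) η₁' η₁'')
              (c₁ * max ((k' : ℝ) / 2) (1 / 2) * δ) ((c₂ + 4) * Real.sqrt δ)) = ∅ := by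
  intro c₁ c₂ hc₁ hc₂
  refine ⟨1, 48 * π * (c₁ + c₂ + 6), one_pos, by positivity, ?_⟩
  rintro δ hδ hδ1 α₁ β₁ α₂ β₂ hα₁ - hβ₁ hJ₁ hα₂ - hβ₂ hJ₂ k k' hk hk' η₀' ⟨h₀'l, h₀'u⟩
    η₁' ⟨h₁'l, h₁'u⟩ η₀'' ⟨h₀''l, h₀''u⟩ η₁'' ⟨h₁''l, h₁''u⟩ hsum b hb hb'
  have hε : 0 < √δ := sqrt_pos.2 hδ
  have hδε : δ ≤ √δ / 1000 := by nlinarith [mul_self_sqrt hδ.le]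
  unfold pPt
  rw [← hsum]
  exact rect_inter_rot_rect_eq_empty hc₁.le hc₂.le hε (by positivity) (by positivity)
    (by linarith [add_mul_le_of_le_mul_inv_sub hε hk])
    (by linarith [add_mul_le_of_le_mul_inv_sub hε hk'])
    (by linarith [mul_le_mul_of_nonneg_right hb hε.le])
    (by nlinarith [add_mul_le_of_le_mul_inv_sub hε hb', pi_pos])
    (by linarith) (abs_le.2 ⟨by linarith, by linarith⟩) (abs_le.2 ⟨by linarith, by linarith⟩)
    (mul_max_half_mul_le hc₁.le (by positivity) hδ.le)
    (mul_max_half_mul_le hc₁.le (by positivity) hδ.le)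
end

section
/- There exists a constant C > 0, independent of δ and of the intervals J_1, J_2, such that for every point x ∈ ℝ² × ℝ, ∑_{(μ,ν) ∈ (𝒩_*^{(δ)})²} χ_{(u_{μ,J_1}^{(δ)})^* + (u_{ν,J_2}^{(δ)})^*}(x) ≤ C, where the sum of sets is the algebraic sum. -/
/-!
Write a decomposition `x = a + b` in polar form, `a.1 = r₁ e^{iθ₁}`, `b.1 = r₂ e^{iθ₂}`, and
put `ε = √δ`. For two decompositions of the same `x`, the time coordinate pins `r₁ + r₂` to
within `O(ε²)` and the short intervals pin each `rᵢ` to within `O(ε)`. The law of cosines for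
`|a.1 + b.1|²` then pins `cos (θ₁ - θ₂)` to `O(ε²) + O(ε (θ₁ - θ₂)²)`, so `θ₁ - θ₂` is known to
`O(ε)` once its sign is fixed; rotating both sums by the same mean angle then pins
`(θ₁ + θ₂) / 2`. Hence both angles, and with them the sector indices `μ, ν`, are determined by `x`
and the sign of `θ₁ - θ₂` up to `O(1)` choices.
-/

open Set Pointwise

noncomputable def GammaStar (δ : ℝ) (μ : ℤ) : Set ℂ :=
  {ξ : ℂ | ξ ≠ 0 ∧ ((μ : ℝ) - 1) * Real.sqrt δ ≤ ξ.arg ∧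
      ξ.arg < ((μ : ℝ) + 2) * Real.sqrt δ}

def calNStar (δ : ℝ) : Set ℤ :=
  {μ : ℤ | |(μ : ℝ)| ≤ Real.pi / 7 * (Real.sqrt δ)⁻¹ - 1}

noncomputable def uStar (δ : ℝ) (μ : ℤ) (α β : ℝ) : Set (ℂ × ℝ) :=
  {p : ℂ × ℝ | |p.2 - ‖p.1‖| ≤ 6 * δ ∧ p.1 ∈ GammaStar δ μ ∧
      ‖p.1‖ ∈ Set.Icc (α - 2 * δ) (β + 2 * δ)}

open Real

lemma mul_abs_le_abs_sin_of_abs_le {x : ℝ} (hx : |x| ≤ 0.95) : 0.636 * |x| ≤ |sin x| := by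
  have hπ : π < 3.1416 := pi_lt_d4
  have h636 : (0.636 : ℝ) ≤ 2 / π := by rw [le_div_iff₀ pi_pos]; linarith
  calc 0.636 * |x| ≤ 2 / π * |x| := by gcongr
    _ ≤ |sin x| := mul_abs_le_abs_sin (by linarith [pi_gt_three])

lemma abs_sq_sub_sq_le_abs_cos_sub_cos {a b : ℝ} (ha : |a| ≤ 0.9) (hb : |b| ≤ 0.9) :
    |a ^ 2 - b ^ 2| ≤ 5 * |cos a - cos b| := by
  have hadd := mul_abs_le_abs_sin_of_abs_le (x := (a + b) / 2)
    (by rw [abs_div, abs_two]; linarith [abs_add_le a b])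
  have hsub := mul_abs_le_abs_sin_of_abs_le (x := (a - b) / 2)
    (by rw [abs_div, abs_two]; linarith [abs_sub a b])
  rw [abs_div, abs_two] at hadd hsub
  have hcos : |cos a - cos b| = 2 * (|sin ((a + b) / 2)| * |sin ((a - b) / 2)|) := by
    rw [cos_sub_cos, abs_mul, abs_mul, abs_neg, abs_two, mul_assoc]
  have hsq : |a ^ 2 - b ^ 2| = |a + b| * |a - b| := by rw [← abs_mul]; ring_nf
  rw [hcos, hsq]
  nlinarith [mul_le_mul hadd hsub (by positivity) (abs_nonneg _), abs_nonneg (a + b),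
    abs_nonneg (a - b)]

lemma abs_sub_le_of_abs_cos_sub_cos_le {ε s s' : ℝ} (hε : 0 < ε) (hs : |s| ≤ 0.9)
    (hs' : |s'| ≤ 0.9) (hss' : 0 ≤ s * s')
    (h : |cos s - cos s'| ≤ 98 * ε ^ 2 + 2.1 * ε * s' ^ 2) : |s - s'| ≤ 50 * ε := by
  have hprod : |s - s'| * |s + s'| ≤ 490 * ε ^ 2 + 10.5 * ε * s' ^ 2 := by
    rw [← abs_mul, show (s - s') * (s + s') = s ^ 2 - s' ^ 2 by ring]
    linarith [abs_sq_sub_sq_le_abs_cos_sub_cos hs hs']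
  have hdiff : |s - s'| ≤ |s + s'| := sq_le_sq.1 (by nlinarith)
  have hs't : |s'| ≤ |s + s'| := sq_le_sq.1 (by nlinarith)
  have hs'sq : s' ^ 2 ≤ 0.9 * |s + s'| := by
    rw [← sq_abs]; nlinarith [abs_nonneg s']
  rcases le_total |s + s'| (23 * ε) with ht | ht
  · linarith
  · nlinarith [abs_nonneg (s - s')]

lemma polar_sum_sq (r₁ r₂ θ₁ θ₂ : ℝ) :
    (r₁ * cos θ₁ + r₂ * cos θ₂) ^ 2 + (r₁ * sin θ₁ + r₂ * sin θ₂) ^ 2 =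
      (r₁ + r₂) ^ 2 - 2 * (r₁ * r₂) * (1 - cos (θ₁ - θ₂)) := by
  rw [cos_sub]
  linear_combination r₁ ^ 2 * sin_sq_add_cos_sq θ₁ + r₂ ^ 2 * sin_sq_add_cos_sq θ₂

lemma abs_cos_sub_cos_le {ε P Q P' Q' s s' : ℝ} (hε : 0 < ε) (hQ : 0.998 ≤ Q)
    (hP : |P ^ 2 - P' ^ 2| ≤ 193 * ε ^ 2) (hQQ' : |Q - Q'| ≤ 4.05 * ε)
    (h : P ^ 2 - 2 * Q * (1 - cos s) = P' ^ 2 - 2 * Q' * (1 - cos s')) :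
    |cos s - cos s'| ≤ 98 * ε ^ 2 + 2.1 * ε * s' ^ 2 := by
  have hc₀ : 0 ≤ 1 - cos s' := by linarith [cos_le_one s']
  have hc₁ : 1 - cos s' ≤ s' ^ 2 / 2 := by linarith [one_sub_sq_div_two_le_cos (x := s')]
  have key : 2 * Q * |cos s - cos s'| ≤ 193 * ε ^ 2 + 4.05 * ε * s' ^ 2 :=
    calc 2 * Q * |cos s - cos s'|
        = |(P' ^ 2 - P ^ 2) + 2 * (Q - Q') * (1 - cos s')| := by
          rw [← abs_of_pos (by linarith : (0 : ℝ) < 2 * Q), ← abs_mul]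
          congr 1; linear_combination h
      _ ≤ |P ^ 2 - P' ^ 2| + 2 * |Q - Q'| * (1 - cos s') := by
          rw [abs_sub_comm (P ^ 2)]
          refine (abs_add_le _ _).trans_eq ?_
          rw [abs_mul, abs_mul, abs_two, abs_of_nonneg hc₀]
      _ ≤ 193 * ε ^ 2 + 2 * (4.05 * ε) * (s' ^ 2 / 2) := by gcongr
      _ = 193 * ε ^ 2 + 4.05 * ε * s' ^ 2 := by ring
  nlinarith [abs_nonneg (cos s - cos s'), mul_nonneg hε.le (sq_nonneg s')]

lemma abs_mul_sub_mul_le (a b a' b' : ℝ) :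
    |a * b - a' * b'| ≤ |a - a'| * |b| + |a'| * |b - b'| := by
  rw [← abs_mul, ← abs_mul, show a * b - a' * b' = (a - a') * b + a' * (b - b') by ring]
  exact abs_add_le _ _

lemma le_of_mul_le_add_sq {ε t : ℝ} (ht₀ : 0 ≤ t) (ht : t ≤ 0.9)
    (h : 1.12 * t ≤ 26.3 * ε + 0.23 * t ^ 2) : t ≤ 29 * ε := by
  nlinarith [mul_nonneg ht₀ (sub_nonneg.2 ht)]

section PolarSums

variable {ε r₁ r₂ r₁' r₂' θ₁ θ₂ θ₁' θ₂' : ℝ}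

lemma abs_angle_diff_sub_le (hε : 0 < ε)
    (hr₁ : r₁ ∈ Icc (0.999 : ℝ) 2.001) (hr₂ : r₂ ∈ Icc (0.999 : ℝ) 2.001)
    (hr₁' : r₁' ∈ Icc (0.999 : ℝ) 2.001) (hr₂' : r₂' ∈ Icc (0.999 : ℝ) 2.001)
    (hd₁ : |r₁ - r₁'| ≤ 1.01 * ε) (hd₂ : |r₂ - r₂'| ≤ 1.01 * ε)
    (hsum : |(r₁ + r₂) - (r₁' + r₂')| ≤ 24 * ε ^ 2)
    (hs : |θ₁ - θ₂| ≤ 0.9) (hs' : |θ₁' - θ₂'| ≤ 0.9) (hsign : 0 ≤ (θ₁ - θ₂) * (θ₁' - θ₂'))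
    (hRe : r₁ * cos θ₁ + r₂ * cos θ₂ = r₁' * cos θ₁' + r₂' * cos θ₂')
    (hIm : r₁ * sin θ₁ + r₂ * sin θ₂ = r₁' * sin θ₁' + r₂' * sin θ₂') :
    |(θ₁ - θ₂) - (θ₁' - θ₂')| ≤ 50 * ε := by
  obtain ⟨hr₁l, hr₁u⟩ := hr₁; obtain ⟨hr₂l, hr₂u⟩ := hr₂
  obtain ⟨hr₁l', hr₁u'⟩ := hr₁'; obtain ⟨hr₂l', hr₂u'⟩ := hr₂'
  have hE := polar_sum_sq r₁ r₂ θ₁ θ₂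
  rw [hRe, hIm, polar_sum_sq] at hE
  have hP : |(r₁ + r₂) ^ 2 - (r₁' + r₂') ^ 2| ≤ 193 * ε ^ 2 := by
    rw [show (r₁ + r₂) ^ 2 - (r₁' + r₂') ^ 2 = ((r₁ + r₂) - (r₁' + r₂')) * (r₁ + r₂ + (r₁' + r₂'))
      by ring, abs_mul, abs_of_pos (by linarith : 0 < r₁ + r₂ + (r₁' + r₂'))]
    nlinarith [abs_nonneg ((r₁ + r₂) - (r₁' + r₂'))]
  have hQ : |r₁ * r₂ - r₁' * r₂'| ≤ 4.05 * ε := by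
    refine (abs_mul_sub_mul_le _ _ _ _).trans ?_
    rw [abs_of_pos (by linarith : 0 < r₂), abs_of_pos (by linarith : 0 < r₁')]
    nlinarith [abs_nonneg (r₁ - r₁'), abs_nonneg (r₂ - r₂')]
  exact abs_sub_le_of_abs_cos_sub_cos_le hε hs hs' hsign
    (abs_cos_sub_cos_le hε (by nlinarith) hP hQ hE.symm)

-- the imaginary part of `e^{-iM} (r₁ e^{iθ₁} + r₂ e^{iθ₂})`, expanded around the mean angle
lemma rotate_polar_sum (r₁ r₂ θ₁ θ₂ M : ℝ) :
    cos M * (r₁ * sin θ₁ + r₂ * sin θ₂) - sin M * (r₁ * cos θ₁ + r₂ * cos θ₂) =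
      (r₁ - r₂) * sin ((θ₁ - θ₂) / 2) * cos (M - (θ₁ + θ₂) / 2) -
        (r₁ + r₂) * cos ((θ₁ - θ₂) / 2) * sin (M - (θ₁ + θ₂) / 2) := by
  obtain ⟨p, q, rfl, rfl⟩ : ∃ p q, θ₁ = q + p ∧ θ₂ = q - p :=
    ⟨(θ₁ - θ₂) / 2, (θ₁ + θ₂) / 2, by ring, by ring⟩
  rw [show (q + p - (q - p)) / 2 = p by ring, show (q + p + (q - p)) / 2 = q by ring]
  simp only [sin_add, cos_add, sin_sub, cos_sub]
  ring

lemma abs_angle_mean_sub_le (hε : 0 < ε)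
    (hr₁ : r₁ ∈ Icc (0.999 : ℝ) 2.001) (hr₂ : r₂ ∈ Icc (0.999 : ℝ) 2.001)
    (hr₁' : r₁' ∈ Icc (0.999 : ℝ) 2.001) (hr₂' : r₂' ∈ Icc (0.999 : ℝ) 2.001)
    (hd₁ : |r₁ - r₁'| ≤ 1.01 * ε) (hd₂ : |r₂ - r₂'| ≤ 1.01 * ε)
    (hθ₁ : |θ₁| ≤ 0.45) (hθ₂ : |θ₂| ≤ 0.45) (hθ₁' : |θ₁'| ≤ 0.45) (hθ₂' : |θ₂'| ≤ 0.45)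
    (hs : |(θ₁ - θ₂) - (θ₁' - θ₂')| ≤ 50 * ε)
    (hRe : r₁ * cos θ₁ + r₂ * cos θ₂ = r₁' * cos θ₁' + r₂' * cos θ₂')
    (hIm : r₁ * sin θ₁ + r₂ * sin θ₂ = r₁' * sin θ₁' + r₂' * sin θ₂') :
    |(θ₁' + θ₂') / 2 - (θ₁ + θ₂) / 2| ≤ 29 * ε := by
  obtain ⟨hr₁l, hr₁u⟩ := hr₁; obtain ⟨hr₂l, hr₂u⟩ := hr₂
  obtain ⟨hr₁l', hr₁u'⟩ := hr₁'; obtain ⟨hr₂l', hr₂u'⟩ := hr₂'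
  rw [abs_le] at hθ₁ hθ₂ hθ₁' hθ₂'
  have hrot := rotate_polar_sum r₁ r₂ θ₁ θ₂ ((θ₁' + θ₂') / 2)
  rw [hRe, hIm, rotate_polar_sum, sub_self, sin_zero, cos_zero] at hrot
  set u := (θ₁' + θ₂') / 2 - (θ₁ + θ₂) / 2 with hu_def
  set p := (θ₁ - θ₂) / 2 with hp_def
  set p' := (θ₁' - θ₂') / 2
  have hD : |(r₁ - r₂) * sin p - (r₁' - r₂') * sin p'| ≤ 26.3 * ε := by
    refine (abs_mul_sub_mul_le _ _ _ _).trans ?_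
    have h₁ : |(r₁ - r₂) - (r₁' - r₂')| ≤ 2.02 * ε := by
      rw [abs_le] at hd₁ hd₂ ⊢; constructor <;> linarith
    have h₂ : |sin p| ≤ 0.45 := abs_sin_le_abs.trans (abs_le.2 ⟨by linarith, by linarith⟩)
    have h₃ : |r₁' - r₂'| ≤ 1.01 := abs_le.2 ⟨by linarith, by linarith⟩
    have h₄ : |sin p - sin p'| ≤ 25 * ε := (abs_sin_sub_sin_le p p').trans (by
      rw [show p - p' = ((θ₁ - θ₂) - (θ₁' - θ₂')) / 2 by ring, abs_div, abs_two]; linarith)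
    calc _ ≤ 2.02 * ε * 0.45 + 1.01 * (25 * ε) := by gcongr
      _ ≤ 26.3 * ε := by linarith
  have hB : |(r₁ - r₂) * sin p| ≤ 0.46 := by
    rw [abs_mul]
    have h₁ : |r₁ - r₂| ≤ 1.01 := abs_le.2 ⟨by linarith, by linarith⟩
    have h₂ : |sin p| ≤ 0.45 := abs_sin_le_abs.trans (abs_le.2 ⟨by linarith, by linarith⟩)
    nlinarith [abs_nonneg (sin p), abs_nonneg (r₁ - r₂)]
  have hcos_p : 0.89 ≤ cos p := by
    nlinarith [one_sub_sq_div_two_le_cos (x := p)]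
  have hu : |u| ≤ 0.9 := abs_le.2 ⟨by linarith, by linarith⟩
  have hcu₀ : 0 ≤ 1 - cos u := by linarith [cos_le_one u]
  have hcu₁ : 1 - cos u ≤ u ^ 2 / 2 := by linarith [one_sub_sq_div_two_le_cos (x := u)]
  have hlead : 1.77 ≤ (r₁ + r₂) * cos p :=
    calc (1.77 : ℝ) ≤ 1.998 * 0.89 := by norm_num
      _ ≤ (r₁ + r₂) * cos p := mul_le_mul (by linarith) hcos_p (by norm_num) (by linarith)
  have hsin : 1.77 * |sin u| ≤ 26.3 * ε + 0.23 * u ^ 2 :=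
    calc 1.77 * |sin u| ≤ (r₁ + r₂) * cos p * |sin u| := by
          gcongr
      _ = |((r₁ - r₂) * sin p - (r₁' - r₂') * sin p') - (r₁ - r₂) * sin p * (1 - cos u)| := by
          rw [← abs_of_pos (by linarith : 0 < (r₁ + r₂) * cos p), ← abs_mul]
          congr 1; linear_combination hrot
      _ ≤ 26.3 * ε + 0.46 * (u ^ 2 / 2) := by
          refine (abs_sub _ _).trans (add_le_add hD ?_)
          rw [abs_mul, abs_of_nonneg hcu₀]
          exact mul_le_mul hB hcu₁ hcu₀ (by norm_num)
      _ = 26.3 * ε + 0.23 * u ^ 2 := by ring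
  have hsin_u := mul_abs_le_abs_sin_of_abs_le (hu.trans (by norm_num))
  refine le_of_mul_le_add_sq (abs_nonneg u) hu ?_
  rw [sq_abs]
  linarith

lemma abs_sub_le_of_polar_sum_eq (hε : 0 < ε)
    (hr₁ : r₁ ∈ Icc (0.999 : ℝ) 2.001) (hr₂ : r₂ ∈ Icc (0.999 : ℝ) 2.001)
    (hr₁' : r₁' ∈ Icc (0.999 : ℝ) 2.001) (hr₂' : r₂' ∈ Icc (0.999 : ℝ) 2.001)
    (hd₁ : |r₁ - r₁'| ≤ 1.01 * ε) (hd₂ : |r₂ - r₂'| ≤ 1.01 * ε)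
    (hsum : |(r₁ + r₂) - (r₁' + r₂')| ≤ 24 * ε ^ 2)
    (hθ₁ : |θ₁| ≤ 0.45) (hθ₂ : |θ₂| ≤ 0.45) (hθ₁' : |θ₁'| ≤ 0.45) (hθ₂' : |θ₂'| ≤ 0.45)
    (hsign : 0 ≤ (θ₁ - θ₂) * (θ₁' - θ₂'))
    (hRe : r₁ * cos θ₁ + r₂ * cos θ₂ = r₁' * cos θ₁' + r₂' * cos θ₂')
    (hIm : r₁ * sin θ₁ + r₂ * sin θ₂ = r₁' * sin θ₁' + r₂' * sin θ₂') :
    |θ₁ - θ₁'| ≤ 54 * ε ∧ |θ₂ - θ₂'| ≤ 54 * ε := by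
  have hs := abs_angle_diff_sub_le hε hr₁ hr₂ hr₁' hr₂' hd₁ hd₂ hsum
    ((abs_sub _ _).trans (by linarith)) ((abs_sub _ _).trans (by linarith)) hsign hRe hIm
  have hu := abs_angle_mean_sub_le hε hr₁ hr₂ hr₁' hr₂' hd₁ hd₂ hθ₁ hθ₂ hθ₁' hθ₂' hs hRe hIm
  rw [abs_le] at hs hu
  exact ⟨abs_le.2 ⟨by linarith, by linarith⟩, abs_le.2 ⟨by linarith, by linarith⟩⟩

end PolarSums

lemma abs_arg_sub_le_of_mem_GammaStar {δ : ℝ} {μ : ℤ} {ξ : ℂ} (h : ξ ∈ GammaStar δ μ) :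
    |ξ.arg - μ * √δ| ≤ 2 * √δ := by
  obtain ⟨-, h₁, h₂⟩ := h
  have := Real.sqrt_nonneg δ
  exact abs_le.2 ⟨by linarith, by linarith⟩

lemma abs_arg_le_of_mem_GammaStar {δ : ℝ} {μ : ℤ} {ξ : ℂ} (hδ : 0 < δ) (hδ' : √δ ≤ 1 / 1000)
    (hμ : μ ∈ calNStar δ) (h : ξ ∈ GammaStar δ μ) : |ξ.arg| ≤ 0.45 := by
  have hε := Real.sqrt_pos.2 hδ
  have hμε : |(μ : ℝ) * √δ| ≤ π / 7 - √δ := by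
    have := mul_le_mul_of_nonneg_right (show |(μ : ℝ)| ≤ _ from hμ) hε.le
    rwa [sub_mul, mul_assoc, inv_mul_cancel₀ hε.ne', mul_one, one_mul, ← abs_of_pos hε,
      ← abs_mul, abs_of_pos hε] at this
  linarith [abs_sub_abs_le_abs_sub ξ.arg (μ * √δ), abs_arg_sub_le_of_mem_GammaStar h, pi_lt_d4]

lemma abs_sub_le_of_abs_arg_sub_le {ε θ θ' : ℝ} {μ μ' : ℤ} (hε : 0 < ε)
    (h : |θ - μ * ε| ≤ 2 * ε) (h' : |θ' - μ' * ε| ≤ 2 * ε) (hθ : |θ - θ'| ≤ 54 * ε) :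
    |μ - μ'| ≤ 58 := by
  have hμ : |((μ : ℝ) - μ') * ε| ≤ 58 * ε := by
    rw [show ((μ : ℝ) - μ') * ε = (θ - θ') - (θ - μ * ε) + (θ' - μ' * ε) by ring]
    linarith [abs_add_le ((θ - θ') - (θ - μ * ε)) (θ' - μ' * ε), abs_sub (θ - θ') (θ - μ * ε)]
  rw [abs_mul, abs_of_pos hε] at hμ
  exact_mod_cast le_of_mul_le_mul_right hμ hε

lemma abs_index_sub_le_of_add_eq {δ α₁ β₁ α₂ β₂ : ℝ} {μ ν μ' ν' : ℤ} {a b a' b' : ℂ × ℝ}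
    (hδ : 0 < δ) (hδ' : δ < 1 / 1000000)
    (hα₁ : 1 ≤ α₁) (hβ₁ : β₁ ≤ 2) (hJ₁ : β₁ - α₁ ≤ √δ)
    (hα₂ : 1 ≤ α₂) (hβ₂ : β₂ ≤ 2) (hJ₂ : β₂ - α₂ ≤ √δ)
    (hμ : μ ∈ calNStar δ) (hν : ν ∈ calNStar δ) (hμ' : μ' ∈ calNStar δ) (hν' : ν' ∈ calNStar δ)
    (ha : a ∈ uStar δ μ α₁ β₁) (hb : b ∈ uStar δ ν α₂ β₂)
    (ha' : a' ∈ uStar δ μ' α₁ β₁) (hb' : b' ∈ uStar δ ν' α₂ β₂)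
    (hab : a + b = a' + b') (hsign : 0 ≤ (a.1.arg - b.1.arg) * (a'.1.arg - b'.1.arg)) :
    |μ - μ'| ≤ 58 ∧ |ν - ν'| ≤ 58 := by
  set ε := √δ
  have hε : 0 < ε := Real.sqrt_pos.2 hδ
  have hδε : δ = ε ^ 2 := (Real.sq_sqrt hδ.le).symm
  have hε' : ε ≤ 1 / 1000 := by nlinarith
  have h4δ : 4 * δ ≤ 0.01 * ε := by rw [hδε]; nlinarith
  obtain ⟨ha₂, haΓ, hal, hau⟩ := ha
  obtain ⟨hb₂, hbΓ, hbl, hbu⟩ := hb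
  obtain ⟨ha₂', haΓ', hal', hau'⟩ := ha'
  obtain ⟨hb₂', hbΓ', hbl', hbu'⟩ := hb'
  have hRe : ‖a.1‖ * cos a.1.arg + ‖b.1‖ * cos b.1.arg =
      ‖a'.1‖ * cos a'.1.arg + ‖b'.1‖ * cos b'.1.arg := by
    simpa only [Complex.norm_mul_cos_arg, Prod.fst_add, Complex.add_re] using congrArg (fun p => p.1.re) hab
  have hIm : ‖a.1‖ * sin a.1.arg + ‖b.1‖ * sin b.1.arg =
      ‖a'.1‖ * sin a'.1.arg + ‖b'.1‖ * sin b'.1.arg := by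
    simpa only [Complex.norm_mul_sin_arg, Prod.fst_add, Complex.add_im] using congrArg (fun p => p.1.im) hab
  have hsum : |(‖a.1‖ + ‖b.1‖) - (‖a'.1‖ + ‖b'.1‖)| ≤ 24 * ε ^ 2 := by
    have h₂ : a.2 + b.2 = a'.2 + b'.2 := congrArg Prod.snd hab
    rw [abs_le] at ha₂ hb₂ ha₂' hb₂'
    rw [← hδε]
    exact abs_le.2 ⟨by linarith, by linarith⟩
  obtain ⟨hθa, hθb⟩ := abs_sub_le_of_polar_sum_eq hε
    ⟨by linarith, by linarith⟩ ⟨by linarith, by linarith⟩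
    ⟨by linarith, by linarith⟩ ⟨by linarith, by linarith⟩
    (abs_le.2 ⟨by linarith, by linarith⟩) (abs_le.2 ⟨by linarith, by linarith⟩) hsum
    (abs_arg_le_of_mem_GammaStar hδ hε' hμ haΓ) (abs_arg_le_of_mem_GammaStar hδ hε' hν hbΓ)
    (abs_arg_le_of_mem_GammaStar hδ hε' hμ' haΓ') (abs_arg_le_of_mem_GammaStar hδ hε' hν' hbΓ')
    hsign hRe hIm
  exact ⟨abs_sub_le_of_abs_arg_sub_le hε (abs_arg_sub_le_of_mem_GammaStar haΓ)
      (abs_arg_sub_le_of_mem_GammaStar haΓ') hθa,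
    abs_sub_le_of_abs_arg_sub_le hε (abs_arg_sub_le_of_mem_GammaStar hbΓ)
      (abs_arg_sub_le_of_mem_GammaStar hbΓ') hθb⟩

lemma finite_and_ncard_le_of_abs_sub_le {T : Set (ℤ × ℤ)} {n : ℕ}
    (h : ∀ p ∈ T, ∀ q ∈ T, |p.1 - q.1| ≤ n ∧ |p.2 - q.2| ≤ n) :
    T.Finite ∧ T.ncard ≤ (2 * n + 1) ^ 2 := by
  rcases T.eq_empty_or_nonempty with rfl | ⟨p₀, hp₀⟩
  · simp
  set B := Finset.Icc (p₀.1 - n) (p₀.1 + n) ×ˢ Finset.Icc (p₀.2 - n) (p₀.2 + n)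
  have hTB : T ⊆ B := by
    intro q hq
    obtain ⟨h₁, h₂⟩ := h q hq p₀ hp₀
    rw [abs_le] at h₁ h₂
    simp only [B, Finset.coe_product, Finset.coe_Icc, Set.mem_prod, Set.mem_Icc]
    omega
  have hB : B.card = (2 * n + 1) ^ 2 := by
    simp only [B, Finset.card_product, Int.card_Icc]
    rw [sq]; congr 1 <;> omega
  refine ⟨B.finite_toSet.subset hTB, ?_⟩
  calc T.ncard ≤ (B : Set (ℤ × ℤ)).ncard := ncard_le_ncard hTB B.finite_toSet
    _ = (2 * n + 1) ^ 2 := by rw [ncard_coe_finset, hB]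

/- A decomposition is only determined up to the reflection `θ₁ - θ₂ ↦ θ₂ - θ₁`, so the two
orientations `σ = ±1` are counted separately. -/
def orientedIndices (δ α₁ β₁ α₂ β₂ σ : ℝ) (x : ℂ × ℝ) : Set (ℤ × ℤ) :=
  {p | p.1 ∈ calNStar δ ∧ p.2 ∈ calNStar δ ∧ ∃ a ∈ uStar δ p.1 α₁ β₁, ∃ b ∈ uStar δ p.2 α₂ β₂,
    a + b = x ∧ 0 ≤ σ * (a.1.arg - b.1.arg)}

lemma setOf_mem_add_subset_orientedIndices (δ α₁ β₁ α₂ β₂ : ℝ) (x : ℂ × ℝ) :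
    {p : ℤ × ℤ | p.1 ∈ calNStar δ ∧ p.2 ∈ calNStar δ ∧
      x ∈ uStar δ p.1 α₁ β₁ + uStar δ p.2 α₂ β₂} ⊆
      orientedIndices δ α₁ β₁ α₂ β₂ 1 x ∪ orientedIndices δ α₁ β₁ α₂ β₂ (-1) x := by
  rintro p ⟨hμ, hν, a, ha, b, hb, hab⟩
  rcases le_total b.1.arg a.1.arg with h | h
  · exact Or.inl ⟨hμ, hν, a, ha, b, hb, hab, by linarith⟩
  · exact Or.inr ⟨hμ, hν, a, ha, b, hb, hab, by linarith⟩

lemma abs_sub_le_of_mem_orientedIndices {δ α₁ β₁ α₂ β₂ σ : ℝ} {x : ℂ × ℝ} (hσ : σ ≠ 0)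
    (hδ : 0 < δ) (hδ' : δ < 1 / 1000000)
    (hα₁ : 1 ≤ α₁) (hβ₁ : β₁ ≤ 2) (hJ₁ : β₁ - α₁ ≤ √δ)
    (hα₂ : 1 ≤ α₂) (hβ₂ : β₂ ≤ 2) (hJ₂ : β₂ - α₂ ≤ √δ) :
    ∀ p ∈ orientedIndices δ α₁ β₁ α₂ β₂ σ x, ∀ q ∈ orientedIndices δ α₁ β₁ α₂ β₂ σ x,
      |p.1 - q.1| ≤ (58 : ℕ) ∧ |p.2 - q.2| ≤ (58 : ℕ) := by
  rintro p ⟨hμ, hν, a, ha, b, hb, hab, hσab⟩ q ⟨hμ', hν', a', ha', b', hb', hab', hσab'⟩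
  have hsign : 0 ≤ σ ^ 2 * ((a.1.arg - b.1.arg) * (a'.1.arg - b'.1.arg)) := by
    linarith [mul_nonneg hσab hσab']
  exact_mod_cast abs_index_sub_le_of_add_eq hδ hδ' hα₁ hβ₁ hJ₁ hα₂ hβ₂ hJ₂ hμ hν hμ' hν'
    ha hb ha' hb' (hab.trans hab'.symm)
    ((mul_nonneg_iff_of_pos_left (by positivity)).1 hsign)

theorem statement16 :
    ∃ C : ℕ, 0 < C ∧
      ∀ δ : ℝ, 0 < δ → δ < 1 / 1000000 →
      ∀ α₁ β₁ α₂ β₂ : ℝ,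
        1 ≤ α₁ → α₁ ≤ β₁ → β₁ ≤ 2 → β₁ - α₁ ≤ Real.sqrt δ →
        1 ≤ α₂ → α₂ ≤ β₂ → β₂ ≤ 2 → β₂ - α₂ ≤ Real.sqrt δ →
        ∀ x : ℂ × ℝ,
          {p : ℤ × ℤ | p.1 ∈ calNStar δ ∧ p.2 ∈ calNStar δ ∧
              x ∈ uStar δ p.1 α₁ β₁ + uStar δ p.2 α₂ β₂}.Finite ∧
          {p : ℤ × ℤ | p.1 ∈ calNStar δ ∧ p.2 ∈ calNStar δ ∧
              x ∈ uStar δ p.1 α₁ β₁ + uStar δ p.2 α₂ β₂}.ncard ≤ C := by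
  refine ⟨2 * (2 * 58 + 1) ^ 2, by norm_num, ?_⟩
  intro δ hδ hδ' α₁ β₁ α₂ β₂ hα₁ _ hβ₁ hJ₁ hα₂ _ hβ₂ hJ₂ x
  have hcover := setOf_mem_add_subset_orientedIndices δ α₁ β₁ α₂ β₂ x
  obtain ⟨hfinPos, hcardPos⟩ := finite_and_ncard_le_of_abs_sub_le
    (abs_sub_le_of_mem_orientedIndices one_ne_zero hδ hδ' hα₁ hβ₁ hJ₁ hα₂ hβ₂ hJ₂)
  obtain ⟨hfinNeg, hcardNeg⟩ := finite_and_ncard_le_of_abs_sub_le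
    (abs_sub_le_of_mem_orientedIndices (neg_ne_zero.2 one_ne_zero) hδ hδ' hα₁ hβ₁ hJ₁ hα₂ hβ₂ hJ₂)
  refine ⟨(hfinPos.union hfinNeg).subset hcover, ?_⟩
  calc _ ≤ _ := ncard_le_ncard hcover (hfinPos.union hfinNeg)
    _ ≤ _ := ncard_union_le _ _
    _ ≤ _ := by omega
end

section
/- Let 0 < ε < 1/2, N = ⌊δ^{-ε/2}⌋, δ_ε = δ N². There exists δ_0 > 0, depending only on ε, such that for 0 < δ < δ_0 the following holds: if μ ∈ 𝒩^{(δ)} with μ = ℓN + k for ℓ ∈ 𝒩_*^{(δ_ε)} and integer k with 0 ≤ k ≤ N − 1, then for i = 1, 2, ũ_{μ,J_i} ⊆ (u_{ℓ,J_i}^{(δ_ε)})^*. Moreover (Lemma 4.5), for δ sufficiently small (depending only on ε), every μ ∈ 𝒩^{(δ)} can be written as μ = ℓN + k with ℓ ∈ 𝒩_*^{(δ_ε)} and k ∈ ℤ, 0 ≤ k ≤ N − 1. -/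
open Set Pointwise

noncomputable def uTilde (δ ε μ : ℝ) (J : Set ℝ) : Set (ℂ × ℝ) :=
  {p : ℂ × ℝ | ∃ q ∈ uSetD δ μ J,
    Real.sqrt (‖p.1 - q.1‖ ^ 2 + (p.2 - q.2) ^ 2) < δ ^ ((1 : ℝ) - ε)}

/-!
A point of `ũ_μ` lies within `δ^(1-ε)` of a point `q` of `u_μ`, and `δ^(1-ε) ≈ δ N² = δ_ε`
because `N ≈ δ^(-ε/2)`. Writing `μ = ℓ N + k` with `0 ≤ k < N`, the fine sector `Γ_μ^(δ)` lies
inside the coarse sector `Γ_ℓ^(δ_ε)`. On the right half-plane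
`|arg x - arg y| ≤ π ‖x - y‖ / ‖y‖` (chord-arc comparison on the unit circle), so moving away
from `q` by less than `δ^(1-ε)` shifts the argument by at most `π δ^(1-ε)`, which is below the
angular width `√δ_ε ≈ δ^((1-ε)/2)`; modulus and height move by less than `δ^(1-ε) ≤ 2 δ_ε`.
The decomposition of `μ` is Euclidean division by `N`, and `ℓ ∈ 𝒩_*` because
`π/8 + 2√δ_ε ≤ π/7` once `δ` is small.
-/
open Real InnerProductGeometry

lemma norm_inv_norm_smul_sub_le {E : Type*} [NormedAddCommGroup E] [NormedSpace ℝ E] (x : E)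
    {y : E} (hy : ‖y‖ = 1) : ‖‖x‖⁻¹ • x - y‖ ≤ 2 * ‖x - y‖ := by
  rcases eq_or_ne x 0 with rfl | hx
  · simp [hy]
  have hradial : ‖‖x‖⁻¹ • x - x‖ ≤ ‖x - y‖ := by
    calc ‖‖x‖⁻¹ • x - x‖ = ‖(‖x‖⁻¹ - 1) • x‖ := by rw [sub_smul, one_smul]
      _ = |(‖x‖⁻¹ - 1) * ‖x‖| := by rw [norm_smul, Real.norm_eq_abs, abs_mul, abs_norm]
      _ = |‖y‖ - ‖x‖| := by rw [sub_mul, inv_mul_cancel₀ (norm_ne_zero_iff.mpr hx), one_mul, hy]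
      _ ≤ ‖x - y‖ := by rw [norm_sub_rev]; exact abs_norm_sub_norm_le y x
  calc ‖‖x‖⁻¹ • x - y‖ ≤ ‖‖x‖⁻¹ • x - x‖ + ‖x - y‖ := norm_sub_le_norm_sub_add_norm_sub _ _ _
    _ ≤ 2 * ‖x - y‖ := by linarith

namespace Complex

lemma arg_div_eq_sub_of_re_pos {x y : ℂ} (hx : 0 < x.re) (hy : 0 < y.re) :
    (x / y).arg = x.arg - y.arg := by
  have hx' := abs_lt.mp (abs_arg_lt_pi_div_two_iff.mpr (Or.inl hx))
  have hy' := abs_lt.mp (abs_arg_lt_pi_div_two_iff.mpr (Or.inl hy))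
  have hx0 : x ≠ 0 := fun h => by simp [h] at hx
  have hy0 : y ≠ 0 := fun h => by simp [h] at hy
  rw [← arg_coe_angle_toReal_eq_arg, arg_div_coe_angle hx0 hy0, ← Real.Angle.coe_sub,
    Real.Angle.toReal_coe_eq_self_iff_mem_Ioc]
  constructor <;> linarith

lemma angle_one_le_pi_mul_norm_sub_one (x : ℂ) : angle x 1 ≤ π * ‖x - 1‖ := by
  rcases eq_or_ne x 0 with rfl | hx
  · simp only [angle_zero_left, zero_sub, norm_neg, norm_one, mul_one]
    linarith [pi_pos]
  have hunit : ‖(‖x‖⁻¹ : ℝ) • x‖ = 1 := by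
    rw [norm_smul, norm_inv, norm_norm, inv_mul_cancel₀ (norm_ne_zero_iff.mpr hx)]
  calc angle x 1 = angle ((‖x‖⁻¹ : ℝ) • x) 1 :=
        (angle_smul_left_of_pos _ _ (by positivity)).symm
    _ ≤ π / 2 * ‖(‖x‖⁻¹ : ℝ) • x - 1‖ := angle_le_mul_norm_sub hunit norm_one
    _ ≤ π / 2 * (2 * ‖x - 1‖) := by gcongr; exact norm_inv_norm_smul_sub_le x norm_one
    _ = π * ‖x - 1‖ := by ring

lemma angle_le_pi_mul_norm_sub_div {x y : ℂ} (hy : y ≠ 0) :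
    angle x y ≤ π * ‖x - y‖ / ‖y‖ := by
  have := angle_one_le_pi_mul_norm_sub_one (x / y)
  rwa [angle_div_left_eq_angle_mul_right, one_mul, div_sub_one hy, norm_div,
    ← mul_div_assoc] at this

lemma abs_arg_sub_arg_le {x y : ℂ} (hx : 0 < x.re) (hy : 0 < y.re) :
    |x.arg - y.arg| ≤ π * ‖x - y‖ / ‖y‖ := by
  have hx0 : x ≠ 0 := fun h => by simp [h] at hx
  have hy0 : y ≠ 0 := fun h => by simp [h] at hy
  rw [← arg_div_eq_sub_of_re_pos hx hy, ← angle_eq_abs_arg hx0 hy0]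
  exact angle_le_pi_mul_norm_sub_div hy0

lemma half_le_re_of_abs_arg_le {z : ℂ} (hz : 1 ≤ ‖z‖) (harg : |z.arg| ≤ π / 3) :
    1 / 2 ≤ z.re := by
  have hcos : 1 / 2 ≤ Real.cos z.arg := by
    rw [← Real.cos_abs, ← Real.cos_pi_div_three]
    exact Real.cos_le_cos_of_nonneg_of_le_pi (abs_nonneg _) (by linarith [pi_pos]) harg
  rw [← norm_mul_cos_arg]
  nlinarith

end Complex

lemma abs_le_mul_inv_sub_one_iff {x c s : ℝ} (hs : 0 < s) :
    |x| ≤ c * s⁻¹ - 1 ↔ (|x| + 1) * s ≤ c := by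
  rw [le_sub_iff_add_le, le_mul_inv_iff₀ hs]

lemma sqrt_mul_sq_intCast {δ : ℝ} {N : ℤ} (hN : 0 ≤ N) : √(δ * (N : ℝ) ^ 2) = √δ * N := by
  rw [Real.sqrt_mul' _ (by positivity), Real.sqrt_sq (by exact_mod_cast hN)]

lemma abs_arg_le_of_mem_GammaD {δ : ℝ} {μ : ℤ} {ξ : ℂ} (hδ : 0 < δ) (hμ : μ ∈ calND δ)
    (hξ : ξ ∈ GammaD δ μ) : |ξ.arg| ≤ π / 8 := by
  have hs : 0 < √δ := Real.sqrt_pos.mpr hδ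
  have hμs : (|(μ : ℝ)| + 1) * √δ ≤ π / 8 := (abs_le_mul_inv_sub_one_iff hs).mp hμ
  obtain ⟨-, hlo, hhi⟩ := hξ
  rw [abs_le]
  constructor <;> nlinarith [neg_abs_le (μ : ℝ), le_abs_self (μ : ℝ)]

lemma GammaD_subset_GammaD_mul_sq {δ : ℝ} {N ℓ k : ℤ} (hk : 0 ≤ k) (hkN : k < N) :
    GammaD δ ((ℓ * N + k : ℤ) : ℝ) ⊆ GammaD (δ * (N : ℝ) ^ 2) ℓ := by
  rintro ξ ⟨hξ, hlo, hhi⟩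
  have hs := Real.sqrt_nonneg δ
  have hk' : (0 : ℝ) ≤ k := by exact_mod_cast hk
  have hkN' : (k : ℝ) + 1 ≤ N := by exact_mod_cast hkN
  push_cast at hlo hhi
  refine ⟨hξ, ?_, ?_⟩ <;> rw [sqrt_mul_sq_intCast (by omega)] <;> nlinarith

lemma mem_GammaStar_of_abs_arg_sub_le {ρ : ℝ} {ℓ : ℤ} {ξ ζ : ℂ} (hζ : ζ ∈ GammaD ρ ℓ)
    (hξ : ξ ≠ 0) (harg : |ξ.arg - ζ.arg| ≤ √ρ) : ξ ∈ GammaStar ρ ℓ := by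
  obtain ⟨-, hlo, hhi⟩ := hζ
  obtain ⟨h1, h2⟩ := abs_le.mp harg
  exact ⟨hξ, by linarith, by linarith⟩

lemma exists_near_of_mem_uTilde {δ ε μ : ℝ} {J : Set ℝ} {p : ℂ × ℝ}
    (hp : p ∈ uTilde δ ε μ J) :
    ∃ q ∈ uSetD δ μ J, ‖p.1 - q.1‖ < δ ^ (1 - ε) ∧ |p.2 - q.2| < δ ^ (1 - ε) := by
  obtain ⟨q, hq, hpq⟩ := hp
  refine ⟨q, hq, ?_, ?_⟩
  · calc ‖p.1 - q.1‖ ≤ √(‖p.1 - q.1‖ ^ 2 + (p.2 - q.2) ^ 2) :=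
          Real.le_sqrt_of_sq_le (by nlinarith)
      _ < δ ^ (1 - ε) := hpq
  · calc |p.2 - q.2| ≤ √(‖p.1 - q.1‖ ^ 2 + (p.2 - q.2) ^ 2) :=
          Real.abs_le_sqrt (by nlinarith)
      _ < δ ^ (1 - ε) := hpq

lemma uTilde_subset_uStar {δ ε α β : ℝ} {N ℓ k : ℤ} (hδ : 0 < δ) (hα : 1 ≤ α)
    (hk : 0 ≤ k) (hkN : k < N) (hμ : ℓ * N + k ∈ calND δ)
    (hr : δ ^ (1 - ε) ≤ 2 * (δ * N ^ 2)) (hrS : π * δ ^ (1 - ε) ≤ √δ * N)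
    (hr_half : δ ^ (1 - ε) ≤ 1 / 2) :
    uTilde δ ε ((ℓ * N + k : ℤ) : ℝ) (Icc α β) ⊆ uStar (δ * N ^ 2) ℓ α β := by
  intro p hp
  obtain ⟨q, ⟨hq, hqΓ, hqα, hqβ⟩, hpq, hpq₂⟩ := exists_near_of_mem_uTilde hp
  have hN : (1 : ℝ) ≤ N := by exact_mod_cast (show 1 ≤ N by omega)
  have hmod : |‖p.1‖ - ‖q.1‖| ≤ δ ^ (1 - ε) := (abs_norm_sub_norm_le p.1 q.1).trans hpq.le
  have hmod' := abs_le.mp hmod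
  have hq_re : 1 / 2 ≤ q.1.re := Complex.half_le_re_of_abs_arg_le (by linarith)
    ((abs_arg_le_of_mem_GammaD hδ hμ hqΓ).trans (by linarith [pi_pos]))
  have hp_re : 0 < p.1.re := by
    have := (abs_le.mp (Complex.abs_re_le_norm (p.1 - q.1))).1
    rw [Complex.sub_re] at this
    linarith
  have harg : |p.1.arg - q.1.arg| ≤ √(δ * N ^ 2) := by
    rw [sqrt_mul_sq_intCast (by omega)]
    calc |p.1.arg - q.1.arg| ≤ π * ‖p.1 - q.1‖ / ‖q.1‖ :=
          Complex.abs_arg_sub_arg_le hp_re (by linarith)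
      _ ≤ π * ‖p.1 - q.1‖ := div_le_self (by positivity) (by linarith)
      _ ≤ √δ * N := by nlinarith [pi_pos]
  have hp0 : p.1 ≠ 0 := fun h => by simp [h] at hp_re
  refine ⟨?_, mem_GammaStar_of_abs_arg_sub_le (GammaD_subset_GammaD_mul_sq hk hkN hqΓ) hp0 harg,
    by linarith, by linarith⟩
  have hδN : δ ≤ δ * N ^ 2 := le_mul_of_one_le_right hδ.le (by nlinarith)
  calc |p.2 - ‖p.1‖| ≤ |p.2 - q.2| + |q.2 - ‖p.1‖| := abs_sub_le _ _ _
    _ ≤ |p.2 - q.2| + (|q.2 - ‖q.1‖| + |‖q.1‖ - ‖p.1‖|) := by gcongr; exact abs_sub_le _ _ _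
    _ ≤ 6 * (δ * N ^ 2) := by rw [abs_sub_comm ‖q.1‖]; linarith

lemma exists_eq_mul_add_of_mem_calND {δ : ℝ} {N μ : ℤ} (hδ : 0 < δ) (hN : 0 < N)
    (hS : √δ * N ≤ π / 112) (hμ : μ ∈ calND δ) :
    ∃ ℓ k : ℤ, ℓ ∈ calNStar (δ * (N : ℝ) ^ 2) ∧ 0 ≤ k ∧ k ≤ N - 1 ∧ μ = ℓ * N + k := by
  refine ⟨μ / N, μ % N, ?_, Int.emod_nonneg μ hN.ne', by linarith [Int.emod_lt_of_pos μ hN],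
    (Int.ediv_mul_add_emod μ N).symm⟩
  have hs : 0 < √δ := Real.sqrt_pos.mpr hδ
  have hμs : (|(μ : ℝ)| + 1) * √δ ≤ π / 8 := (abs_le_mul_inv_sub_one_iff hs).mp hμ
  have hN' : (0 : ℝ) < N := by exact_mod_cast hN
  have hk : (0 : ℝ) ≤ ((μ % N : ℤ) : ℝ) := by exact_mod_cast Int.emod_nonneg μ hN.ne'
  have hkN : ((μ % N : ℤ) : ℝ) + 1 ≤ N := by exact_mod_cast Int.emod_lt_of_pos μ hN
  have hdiv : ((μ / N : ℤ) : ℝ) * N = μ - ((μ % N : ℤ) : ℝ) := by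
    rw [eq_sub_iff_add_eq]; exact_mod_cast Int.ediv_mul_add_emod μ N
  have hℓ : |((μ / N : ℤ) : ℝ)| * N ≤ |(μ : ℝ)| + N - 1 := by
    rw [← abs_of_pos hN', ← abs_mul, abs_of_pos hN', hdiv]
    calc |(μ : ℝ) - ((μ % N : ℤ) : ℝ)| ≤ |(μ : ℝ)| + |((μ % N : ℤ) : ℝ)| := abs_sub _ _
      _ ≤ |(μ : ℝ)| + N - 1 := by rw [abs_of_nonneg hk]; linarith
  rw [calNStar, mem_ofPred_eq, sqrt_mul_sq_intCast hN.le,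
    abs_le_mul_inv_sub_one_iff (by positivity)]
  nlinarith [abs_nonneg ((μ / N : ℤ) : ℝ)]

lemma three_quarters_le_floor {X : ℝ} (hX : 4 ≤ X) : 3 / 4 * X ≤ ⌊X⌋ := by
  linarith [Int.sub_one_lt_floor X]

lemma sqrt_mul_floor_rpow_mem_Icc {δ ε : ℝ} (hδ : 0 < δ) (hX : 4 ≤ δ ^ (-(ε / 2))) :
    √δ * ⌊δ ^ (-(ε / 2))⌋ ∈ Icc (3 / 4 * δ ^ ((1 - ε) / 2)) (δ ^ ((1 - ε) / 2)) := by
  have hy : √δ * δ ^ (-(ε / 2)) = δ ^ ((1 - ε) / 2) := by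
    rw [Real.sqrt_eq_rpow, ← Real.rpow_add hδ]; ring_nf
  rw [← hy]
  have hs := Real.sqrt_nonneg δ
  constructor
  · nlinarith [three_quarters_le_floor hX]
  · exact mul_le_mul_of_nonneg_left (Int.floor_le _) hs

lemma four_le_rpow_neg_half_and_rpow_le {δ ε : ℝ} (hδ : 0 < δ) (hε : 0 < ε) (hε' : ε ≤ 2 / 3)
    (h : δ < (1 / 100) ^ (4 / ε)) : 4 ≤ δ ^ (-(ε / 2)) ∧ δ ^ ((1 - ε) / 2) ≤ 1 / 100 := by
  have ht : δ ^ (ε / 4) < 1 / 100 := by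
    calc δ ^ (ε / 4) < ((1 / 100 : ℝ) ^ (4 / ε)) ^ (ε / 4) :=
          Real.rpow_lt_rpow hδ.le h (by positivity)
      _ = 1 / 100 := by
          rw [← Real.rpow_mul (by norm_num), div_mul_div_comm, mul_comm, div_self (by positivity),
            Real.rpow_one]
  have ht0 : 0 < δ ^ (ε / 4) := Real.rpow_pos_of_pos hδ _
  have hδ1 : δ < 1 := h.trans (Real.rpow_lt_one (by norm_num) (by norm_num) (by positivity))
  constructor
  · have hX : δ ^ (-(ε / 2)) * (δ ^ (ε / 4)) ^ 2 = 1 := by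
      rw [← Real.rpow_natCast, ← Real.rpow_mul hδ.le, ← Real.rpow_add hδ]
      ring_nf
      exact Real.rpow_zero δ
    nlinarith
  · calc δ ^ ((1 - ε) / 2) ≤ δ ^ (ε / 4) :=
          Real.rpow_le_rpow_of_exponent_ge hδ hδ1.le (by linarith)
      _ ≤ 1 / 100 := ht.le

theorem statement19 :
    ∀ ε : ℝ, 0 < ε → ε < 1 / 2 →
    ∃ δ₀ : ℝ, 0 < δ₀ ∧
      ∀ δ : ℝ, 0 < δ → δ < 1 / 1000000 → δ < δ₀ →
      ∀ α₁ β₁ α₂ β₂ : ℝ,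
        1 ≤ α₁ → α₁ ≤ β₁ → β₁ ≤ 2 → β₁ - α₁ ≤ Real.sqrt δ →
        1 ≤ α₂ → α₂ ≤ β₂ → β₂ ≤ 2 → β₂ - α₂ ≤ Real.sqrt δ →
        ((∀ μ ℓ k : ℤ, μ ∈ calND δ →
            ℓ ∈ calNStar (δ * (⌊δ ^ (-(ε / 2))⌋ : ℝ) ^ 2) →
            0 ≤ k → k ≤ ⌊δ ^ (-(ε / 2))⌋ - 1 → μ = ℓ * ⌊δ ^ (-(ε / 2))⌋ + k →
            uTilde δ ε (μ : ℝ) (Icc α₁ β₁)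
              ⊆ uStar (δ * (⌊δ ^ (-(ε / 2))⌋ : ℝ) ^ 2) ℓ α₁ β₁ ∧
            uTilde δ ε (μ : ℝ) (Icc α₂ β₂)
              ⊆ uStar (δ * (⌊δ ^ (-(ε / 2))⌋ : ℝ) ^ 2) ℓ α₂ β₂) ∧
         (∀ μ : ℤ, μ ∈ calND δ →
            ∃ ℓ k : ℤ, ℓ ∈ calNStar (δ * (⌊δ ^ (-(ε / 2))⌋ : ℝ) ^ 2) ∧
              0 ≤ k ∧ k ≤ ⌊δ ^ (-(ε / 2))⌋ - 1 ∧
              μ = ℓ * ⌊δ ^ (-(ε / 2))⌋ + k)) := by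
  intro ε hε hε2
  refine ⟨(1 / 100) ^ (4 / ε), by positivity, ?_⟩
  intro δ hδ _ hδ₀ α₁ β₁ α₂ β₂ hα₁ _ _ _ hα₂ _ _ _
  obtain ⟨hX, hy⟩ := four_le_rpow_neg_half_and_rpow_le hδ hε (by linarith) hδ₀
  obtain ⟨hSlo, hShi⟩ := sqrt_mul_floor_rpow_mem_Icc hδ hX
  set N := ⌊δ ^ (-(ε / 2))⌋
  set y := δ ^ ((1 - ε) / 2)
  have hy0 : 0 ≤ y := Real.rpow_nonneg hδ.le _
  have hN : 0 < N := Int.floor_pos.mpr (by linarith)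
  have hry : δ ^ (1 - ε) = y ^ 2 := by
    rw [← Real.rpow_natCast, ← Real.rpow_mul hδ.le]; ring_nf
  have hρ : δ * N ^ 2 = (√δ * N) ^ 2 := by rw [mul_pow, Real.sq_sqrt hδ.le]
  have hr : δ ^ (1 - ε) ≤ 2 * (δ * N ^ 2) := by rw [hry, hρ]; nlinarith
  have hrS : π * δ ^ (1 - ε) ≤ √δ * N := by rw [hry]; nlinarith [pi_lt_four]
  have hr_half : δ ^ (1 - ε) ≤ 1 / 2 := by rw [hry]; nlinarith
  refine ⟨fun μ ℓ k hμ _ hk hkN hμN => ?_,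
    fun μ hμ => exists_eq_mul_add_of_mem_calND hδ hN (by linarith [pi_gt_three]) hμ⟩
  subst hμN
  exact ⟨uTilde_subset_uStar hδ hα₁ hk (by omega) hμ hr hrS hr_half,
    uTilde_subset_uStar hδ hα₂ hk (by omega) hμ hr hrS hr_half⟩
end
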